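/- For all sufficiently large n and any k with 1 ≤ k ≤ n/2 satisfying (k log³ n) ≤ (n−k+1), one has Q( √(2 log((n−k+1)/(k log³ n))) ) ≥ (k log n)/(n−k+1), and consequently Q^{-1}( (k log n)/(n−k+1) ) ≥ √(2 log((n−k+1)/(k log³ n))). -/

import Mathlib

/-!
Lower-bounding the tail integral by the box `[x, x + δ]` of width `δ = 1/(x+1)` gives
the Mill's ratio type bound `Q(x) ≥ e^{-x²/2} / (12 (x + 1))` for `x ≥ 0`.
At `x = √(2 log r)` with `r = (n-k+1)/(k log³ n)` the factor `e^{-x²/2}` is `1/r`,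
and `x + 1 ≤ log n`, so for `log n ≥ 12` the bound is at least
`1/(r log² n) = k log n/(n-k+1)`. The bound on `Q⁻¹` follows because `Q` is strictly
decreasing and tends to `0`.
-/

open MeasureTheory ProbabilityTheory

/-- The standard Gaussian tail function `Q(x) = P(Z > x)`. -/
noncomputable def gaussTail (x : ℝ) : ℝ := ((gaussianReal 0 1) (Set.Ioi x)).toReal

/-- The inverse Gaussian tail function `Q⁻¹`. -/
noncomputable def gaussTailInv (p : ℝ) : ℝ := sInf {x : ℝ | gaussTail x ≤ p}

open Filter Real Set Topology

lemma gaussTail_eq_one_sub_cdf (x : ℝ) : gaussTail x = 1 - cdf (gaussianReal 0 1) x := by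
  rw [cdf_eq_real, ← probReal_compl_eq_one_sub measurableSet_Iic, compl_Iic]
  rfl

lemma tendsto_gaussTail_atTop : Tendsto gaussTail atTop (𝓝 0) := by
  rw [funext gaussTail_eq_one_sub_cdf, ← sub_self 1]
  exact (tendsto_cdf_atTop _).const_sub 1

lemma gaussTail_strictAnti : StrictAnti gaussTail := by
  intro a b hab
  have hsplit : gaussTail a = (gaussianReal 0 1).real (Ioc a b) + gaussTail b := by
    change (gaussianReal 0 1).real (Ioi a) = _ + (gaussianReal 0 1).real (Ioi b)
    rw [← Ioc_union_Ioi_eq_Ioi hab.le]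
    exact measureReal_union (Ioc_disjoint_Ioi le_rfl) measurableSet_Ioi
  have hpos : 0 < (gaussianReal 0 1).real (Ioc a b) := by
    refine ENNReal.toReal_pos (fun h0 => ?_) (measure_ne_top _ _)
    have := gaussianReal_absolutelyContinuous' 0 one_ne_zero h0
    simp only [Real.volume_Ioc, ENNReal.ofReal_eq_zero, sub_nonpos] at this
    exact this.not_gt hab
  linarith

lemma le_gaussTailInv {p x : ℝ} (hp : 0 < p) (hx : p ≤ gaussTail x) : x ≤ gaussTailInv p := by
  obtain ⟨y, hy⟩ := (tendsto_gaussTail_atTop.eventually (gt_mem_nhds hp)).exists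
  refine le_csInf ⟨y, hy.le⟩ fun b (hb : gaussTail b ≤ p) => ?_
  by_contra! hbx
  linarith [gaussTail_strictAnti hbx]

lemma gaussTail_eq_integral (x : ℝ) : gaussTail x = ∫ y in Ioi x, gaussianPDFReal 0 1 y := by
  rw [gaussTail, gaussianReal_apply_eq_integral 0 one_ne_zero,
    ENNReal.toReal_ofReal (integral_nonneg fun y => gaussianPDFReal_nonneg 0 1 y)]

lemma gaussianPDFReal_zero_one (y : ℝ) :
    gaussianPDFReal 0 1 y = (√(2 * π))⁻¹ * exp (-y ^ 2 / 2) := by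
  simp [gaussianPDFReal]

lemma gaussianPDFReal_zero_one_le {x y : ℝ} (hx : 0 ≤ x) (hxy : x ≤ y) :
    gaussianPDFReal 0 1 y ≤ gaussianPDFReal 0 1 x := by
  rw [gaussianPDFReal_zero_one, gaussianPDFReal_zero_one]
  gcongr

lemma mul_gaussianPDFReal_le_gaussTail {x δ : ℝ} (hx : 0 ≤ x) (hδ : 0 ≤ δ) :
    δ * gaussianPDFReal 0 1 (x + δ) ≤ gaussTail x := by
  have hint : IntegrableOn (gaussianPDFReal 0 1) (Ioi x) :=
    (integrable_gaussianPDFReal 0 1).integrableOn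
  have hbox : gaussianPDFReal 0 1 (x + δ) * volume.real (Ioc x (x + δ))
      ≤ ∫ y in Ioc x (x + δ), gaussianPDFReal 0 1 y :=
    setIntegral_ge_of_const_le_real measurableSet_Ioc measure_Ioc_lt_top.ne
      (fun y hy => gaussianPDFReal_zero_one_le (hx.trans hy.1.le) hy.2)
      (hint.mono_set Ioc_subset_Ioi_self)
  rw [Real.volume_real_Ioc_of_le (by linarith), add_sub_cancel_left, mul_comm] at hbox
  rw [gaussTail_eq_integral]
  exact hbox.trans (setIntegral_mono_set hint (ae_of_all _ fun y => gaussianPDFReal_nonneg 0 1 y)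
    Ioc_subset_Ioi_self.eventuallyLE)

lemma sqrt_two_pi_mul_exp_three_halves_le : √(2 * π) * exp (3 / 2) ≤ 12 := by
  have hsq : (√(2 * π) * exp (3 / 2)) ^ 2 = 2 * π * exp 1 ^ 3 := by
    rw [mul_pow, sq_sqrt (by positivity), ← exp_nat_mul, ← exp_nat_mul]
    norm_num
  have he : exp 1 ^ 3 ≤ 2.7182818286 ^ 3 := by gcongr; exact exp_one_lt_d9.le
  refine (abs_le_of_sq_le_sq' ?_ (by norm_num)).2
  rw [hsq]
  have : π * exp 1 ^ 3 ≤ 3.15 * 2.7182818286 ^ 3 := by gcongr; exact pi_lt_d2.le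
  linarith

lemma exp_div_le_gaussTail {x : ℝ} (hx : 0 ≤ x) :
    exp (-x ^ 2 / 2) / (12 * (x + 1)) ≤ gaussTail x := by
  set δ := (x + 1)⁻¹
  have hδ : 0 < δ := by positivity
  have hxδ : x * δ ≤ 1 := by
    rw [← div_eq_mul_inv, div_le_one (by linarith)]; linarith
  have hδ1 : δ ≤ 1 := inv_le_one_of_one_le₀ (by linarith)
  have hexp : exp (-x ^ 2 / 2) * exp (-(3 / 2)) ≤ exp (-(x + δ) ^ 2 / 2) := by
    rw [← exp_add]
    gcongr
    nlinarith
  calc exp (-x ^ 2 / 2) / (12 * (x + 1))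
      ≤ exp (-x ^ 2 / 2) / (√(2 * π) * exp (3 / 2) * (x + 1)) := by
        gcongr
        exact sqrt_two_pi_mul_exp_three_halves_le
    _ = δ * ((√(2 * π))⁻¹ * (exp (-x ^ 2 / 2) * exp (-(3 / 2)))) := by
        rw [exp_neg]
        field_simp
        exact (mul_inv_cancel₀ (by linarith)).symm
    _ ≤ δ * ((√(2 * π))⁻¹ * exp (-(x + δ) ^ 2 / 2)) := by gcongr
    _ ≤ gaussTail x := by
        simpa only [gaussianPDFReal_zero_one] using mul_gaussianPDFReal_le_gaussTail hx hδ.le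

lemma inv_mul_sq_le_gaussTail_sqrt_two_log {r t : ℝ} (hr : 1 ≤ r) (ht : 12 ≤ t)
    (hrt : log r ≤ t) :
    (r * t ^ 2)⁻¹ ≤ gaussTail √(2 * log r) := by
  set x := √(2 * log r)
  have hx : 0 ≤ x := sqrt_nonneg _
  have hxsq : x ^ 2 = 2 * log r := sq_sqrt (by linarith [log_nonneg hr])
  have hxt : x + 1 ≤ t := by nlinarith
  have hexp : exp (-x ^ 2 / 2) = r⁻¹ := by
    rw [hxsq, show -(2 * log r) / 2 = -log r by ring, exp_neg, exp_log (by linarith)]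
  calc (r * t ^ 2)⁻¹ ≤ r⁻¹ / (12 * (x + 1)) := by
        rw [mul_inv, div_eq_mul_inv]
        gcongr
        nlinarith
    _ = exp (-x ^ 2 / 2) / (12 * (x + 1)) := by rw [hexp]
    _ ≤ gaussTail x := exp_div_le_gaussTail hx

/-- For all sufficiently large `n` and `1 ≤ k ≤ n/2` with `k log³n ≤ n−k+1`:
`Q(√(2 log((n−k+1)/(k log³n)))) ≥ (k log n)/(n−k+1)` and hence
`Q⁻¹((k log n)/(n−k+1)) ≥ √(2 log((n−k+1)/(k log³n)))`. -/
theorem stmt14 :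
    ∃ N : ℕ, ∀ n : ℕ, N ≤ n → ∀ k : ℕ, 1 ≤ k → (k : ℝ) ≤ (n : ℝ) / 2 →
      (k : ℝ) * (Real.log n) ^ 3 ≤ (n : ℝ) - k + 1 →
      gaussTail (Real.sqrt (2 * Real.log (((n : ℝ) - k + 1) / ((k : ℝ) * (Real.log n) ^ 3))))
          ≥ (k : ℝ) * Real.log n / ((n : ℝ) - k + 1)
        ∧ gaussTailInv ((k : ℝ) * Real.log n / ((n : ℝ) - k + 1))
          ≥ Real.sqrt (2 * Real.log (((n : ℝ) - k + 1) / ((k : ℝ) * (Real.log n) ^ 3))) := by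
  refine ⟨⌈exp 12⌉₊, fun n hn k hk1 _ hk3 => ?_⟩
  have hk : (1 : ℝ) ≤ k := by exact_mod_cast hk1
  have hexp : exp 12 ≤ n := (Nat.le_ceil _).trans (by exact_mod_cast hn)
  have ht : 12 ≤ log n := (le_log_iff_exp_le ((exp_pos 12).trans_le hexp)).2 hexp
  have hkt : 1 ≤ k * log n ^ 3 := one_le_mul_of_one_le_of_one_le hk (one_le_pow₀ (by linarith))
  have hr : 1 ≤ (n - k + 1) / (k * log n ^ 3) := (one_le_div (by linarith)).2 hk3
  have hrn : log ((n - k + 1) / (k * log n ^ 3)) ≤ log n :=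
    log_le_log (by linarith) ((div_le_self (by linarith) hkt).trans (by linarith))
  have hp : k * log n / (n - k + 1) = ((n - k + 1) / (k * log n ^ 3) * log n ^ 2)⁻¹ := by
    field_simp
  have hQ := hp ▸ inv_mul_sq_le_gaussTail_sqrt_two_log hr ht hrn
  have hpos : 0 < k * log n / (n - k + 1) :=
    div_pos (mul_pos (by linarith) (by linarith)) (by linarith)
  exact ⟨hQ, le_gaussTailInv hpos hQ⟩
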